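/- If a WKS has no 0-cycles and every cycle has accumulated weight at least w_min > 0, then any transition sequence of length n has accumulated weight at least ⌊n/|S|⌋ · w_min. -/
import Mathlib


open scoped NNReal ENNReal

/-- A weighted Kripke structure over state space `S` and atomic propositions `AP`:
a labelling function and a transition relation with nonnegative rational weights. -/
structure WKS (S : Type) (AP : Type) where
  trans : S → ℚ≥0 → S → Prop
  label : S → Set AP

namespace WKS

open Classical

variable {S AP : Type} (K : WKS S AP)

/-- `K.path t l` holds if `l` is a transition sequence (list of weight/state pairs)
starting in `t`. -/
def path : S → List (ℚ≥0 × S) → Prop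
  | _, [] => True
  | s, (w, s') :: l => K.trans s w s' ∧ path s' l

/-- Accumulated weight of a transition sequence (the empty sequence has weight 0). -/
def acc (l : List (ℚ≥0 × S)) : ℚ≥0 := (l.map Prod.fst).sum

/-- The end state of a transition sequence starting in `t`. -/
def endSt (t : S) (l : List (ℚ≥0 × S)) : S := (l.map Prod.snd).getLastD t

/-- The intermediate states of a transition sequence (all visited states except
the start state and the end state). -/
def inter (l : List (ℚ≥0 × S)) : List S := (l.map Prod.snd).dropLast

/-- Relative deviation `|v/w - 1|` as an extended nonnegative real. -/
noncomputable def rel (w v : ℚ≥0) : ℝ≥0∞ := ENNReal.ofReal |(v : ℝ) / (w : ℝ) - 1|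

/-- The distance refinement operator `F`. -/
noncomputable def F (d : S → S → ℝ≥0∞) : S → S → ℝ≥0∞ := fun s t =>
  if K.label s ≠ K.label t then ⊤
  else
    ⨆ w : ℚ≥0, ⨆ s' : S, ⨆ _ : K.trans s w s',
      ⨅ l : {l : List (ℚ≥0 × S) // K.path t l},
        max (rel w (acc l.1))
          (max (d s' (endSt t l.1)) (⨆ u ∈ inter l.1, d s u))

/-- The weighted branching simulation distance: the least pre-fixed point of `F`. -/
noncomputable def wdist : S → S → ℝ≥0∞ := fun s t =>
  ⨅ d ∈ {d : S → S → ℝ≥0∞ | F K d ≤ d}, d s t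

/-- Weighted branching ε-simulation relations. -/
def IsEpsSim (ε : ℝ≥0) (R : S → S → Prop) : Prop :=
  ∀ s t, R s t →
    K.label s = K.label t ∧
      ∀ w s', K.trans s w s' →
        ∃ l, K.path t l ∧
          (w : ℝ) * (1 - ε) ≤ ((acc l : ℚ≥0) : ℝ) ∧
          ((acc l : ℚ≥0) : ℝ) ≤ (w : ℝ) * (1 + ε) ∧
          R s' (endSt t l) ∧ ∀ u ∈ inter l, R s u

end WKS


namespace WKS
variable {S AP : Type} (K : WKS S AP)

lemma endSt_cons (t s : S) (w : ℚ≥0) (l : List (ℚ≥0 × S)) :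
    endSt t ((w, s) :: l) = endSt s l := by
  simp only [endSt, List.map_cons, List.getLastD_cons]

lemma endSt_append (t : S) (a b : List (ℚ≥0 × S)) :
    WKS.endSt t (a ++ b) = WKS.endSt (WKS.endSt t a) b := by
  induction a generalizing t with
  | nil => simp [endSt]
  | cons p a ih =>
    obtain ⟨w, s⟩ := p
    simp only [List.cons_append, endSt_cons]
    exact ih s

lemma path_append (t : S) (a b : List (ℚ≥0 × S)) :
    K.path t (a ++ b) ↔ K.path t a ∧ K.path (WKS.endSt t a) b := by
  induction a generalizing t with
  | nil => simp [path, endSt]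
  | cons p a ih =>
    obtain ⟨w, s⟩ := p
    simp only [List.cons_append, path, endSt_cons, and_assoc]
    exact and_congr_right fun _ => ih s

lemma acc_append (a b : List (ℚ≥0 × S)) : acc (S := S) (a ++ b) = acc a + acc b := by
  simp [acc]

end WKS

/-- in a finite WKS without 0-cycles in which every cycle has
accumulated weight at least `wmin > 0`, any transition sequence of length `n`
has accumulated weight at least `⌊n / |S|⌋ · wmin`. -/
theorem stmt7 {S AP : Type} [Fintype S] (K : WKS S AP)
    (hfin : {p : S × ℚ≥0 × S | K.trans p.1 p.2.1 p.2.2}.Finite)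
    (wmin : ℚ≥0) (hpos : 0 < wmin)
    (hcyc : ∀ u c, K.path u c → c ≠ [] → WKS.endSt u c = u → wmin ≤ WKS.acc c) :
    ∀ (t : S) (l : List (ℚ≥0 × S)), K.path t l →
      ((l.length / Fintype.card S : ℕ) : ℚ≥0) * wmin ≤ WKS.acc l := by
  intro t₀ l₀ hl₀
  have hSpos : 0 < Fintype.card S := Fintype.card_pos_iff.mpr ⟨t₀⟩
  set N := Fintype.card S with hN
  have key : ∀ n (t : S) (l : List (ℚ≥0 × S)), K.path t l → l.length = n →
      ((n / N : ℕ) : ℚ≥0) * wmin ≤ WKS.acc l := by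
    intro n
    induction n using Nat.strong_induction_on with
    | _ n ih =>
      intro t l hl hn
      by_cases hlen : n < N
      · rw [Nat.div_eq_of_lt hlen]
        simp
      push_neg at hlen
      have hlenl : N ≤ l.length := hn ▸ hlen
      -- pigeonhole: two equal states among the first N+1 visited states
      obtain ⟨a, b, hab, hfab⟩ :=
        Fintype.exists_ne_map_eq_of_card_lt
          (fun k : Fin (N + 1) => WKS.endSt t (l.take k)) (by simp [hN])
      wlog hab' : (a : ℕ) < (b : ℕ) generalizing a b
      · exact this b a hab.symm hfab.symm
          (lt_of_le_of_ne (not_lt.mp hab') (fun h => hab (Fin.ext h.symm)))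
      set i : ℕ := (a : ℕ) with hi
      set j : ℕ := (b : ℕ) with hj
      have hjN : j ≤ N := Nat.lt_succ_iff.mp b.isLt
      have hjlen : j ≤ l.length := hjN.trans hlenl
      set l₁ := l.take i with hl₁
      set c := (l.drop i).take (j - i) with hc
      set l₂ := l.drop j with hl₂
      have htakej : l.take j = l₁ ++ c := by
        rw [hl₁, hc, ← List.take_add, Nat.add_sub_cancel' hab'.le]
      have hsplit : l = l.take j ++ l₂ := (List.take_append_drop j l).symm
      rw [hsplit, WKS.path_append (K := K)] at hl
      obtain ⟨hp₁c, hp₂⟩ := hl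
      rw [htakej, WKS.path_append (K := K)] at hp₁c
      obtain ⟨hp₁, hpc⟩ := hp₁c
      have hendeq : WKS.endSt t (l.take j) = WKS.endSt (WKS.endSt t l₁) c := by
        rw [htakej, WKS.endSt_append]
      have hcyc_eq : WKS.endSt (WKS.endSt t l₁) c = WKS.endSt t l₁ := by
        rw [← hendeq]; exact hfab.symm
      have hclen : c.length = min (j - i) (l.length - i) := by simp [hc]
      have hcne : c ≠ [] := by
        intro h
        rw [h] at hclen
        simp only [List.length_nil] at hclen
        omega
      have hwc : wmin ≤ WKS.acc c := hcyc _ c hpc hcne hcyc_eq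
      set l' := l₁ ++ l₂ with hl'
      have hp' : K.path t l' := by
        rw [hl', WKS.path_append (K := K)]
        refine ⟨hp₁, ?_⟩
        rw [← hcyc_eq, ← hendeq]
        exact hp₂
      have hl₁len : l₁.length = i := by
        simp [hl₁]
        omega
      have hl₂len : l₂.length = l.length - j := by simp [hl₂]
      have hn' : l'.length = i + (l.length - j) := by
        simp [hl', hl₁len, hl₂len]
      have hlt : l'.length < n := by omega
      have hacc : WKS.acc l = WKS.acc l' + WKS.acc c := by
        conv_lhs => rw [hsplit, htakej]
        rw [WKS.acc_append, WKS.acc_append, hl', WKS.acc_append]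
        ring
      have hdiv : n / N ≤ l'.length / N + 1 := by
        rw [Nat.div_eq_sub_div hSpos hlen]
        have h1 : n - N ≤ l'.length := by omega
        exact Nat.add_le_add_right (Nat.div_le_div_right h1) 1
      calc ((n / N : ℕ) : ℚ≥0) * wmin
          ≤ ((l'.length / N + 1 : ℕ) : ℚ≥0) * wmin := by
            exact mul_le_mul_left (Nat.cast_le.mpr hdiv) wmin
        _ = ((l'.length / N : ℕ) : ℚ≥0) * wmin + wmin := by push_cast; ring
        _ ≤ WKS.acc l' + WKS.acc c :=
            add_le_add (ih l'.length hlt t l' hp' rfl) hwc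
        _ = WKS.acc l := hacc.symm
  exact key l₀.length t₀ l₀ hl₀ rfl
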